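/- arXiv:math/0610202 — 3 statements merged into one kernel-verified Lean document; each statement's English description precedes it below -/
import Mathlib

section
/- For fixed x > 0 and θ ∈ [0, π], the limit as y → ∞ of arcosh(cosh(x)·cosh(y) − sinh(x)·sinh(y)·cos(θ)) − y equals log(cosh(x) − sinh(x)·cos(θ)). -/
/-!
With `v = u y * exp (-y)` one has `(u + √(u² - 1)) e^{-y} = v + √(v² - e^{-2y})`, so
`arcosh u - y` tends to `log (2L)` whenever `v → L > 0`. For
`u y = cosh x cosh y - sinh x sinh y cos θ` the exponential expansion gives
`v = c / 2 + O(e^{-2y})` with `c = cosh x - sinh x cos θ`, and `c > 0` because `|sinh x| < cosh x`.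
-/

noncomputable def arcosh (x : ℝ) : ℝ := Real.log (x + Real.sqrt (x ^ 2 - 1))

open Real hiding arcosh
open Filter Topology

lemma abs_sinh_lt_cosh (x : ℝ) : |sinh x| < cosh x := by
  rw [abs_lt]
  constructor
  · linarith [cosh_add_sinh x, exp_pos x]
  · exact sinh_lt_cosh x

lemma cosh_sub_sinh_mul_pos (x : ℝ) {t : ℝ} (ht : |t| ≤ 1) : 0 < cosh x - sinh x * t := by
  have : |sinh x * t| ≤ |sinh x| := by
    rw [abs_mul]; exact mul_le_of_le_one_right (abs_nonneg _) ht
  linarith [le_abs_self (sinh x * t), abs_sinh_lt_cosh x]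

lemma cosh_mul_cosh_sub_sinh_mul_sinh_mul_mul_exp_neg (x y t : ℝ) :
    (cosh x * cosh y - sinh x * sinh y * t) * exp (-y) =
      (cosh x - sinh x * t) / 2 + (cosh x + sinh x * t) / 2 * exp (-y) ^ 2 := by
  simp only [cosh_eq, sinh_eq, exp_neg]
  field_simp
  ring

lemma add_sqrt_sq_sub_one_mul_exp_neg (u y : ℝ) :
    (u + √(u ^ 2 - 1)) * exp (-y) = u * exp (-y) + √((u * exp (-y)) ^ 2 - exp (-y) ^ 2) := by
  rw [add_mul, show (u * exp (-y)) ^ 2 - exp (-y) ^ 2 = (u ^ 2 - 1) * exp (-y) ^ 2 by ring,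
    sqrt_mul' _ (sq_nonneg _), sqrt_sq (exp_nonneg _)]

lemma arcosh_sub_eq_log_add_sqrt_mul_exp_neg {u : ℝ} (hu : 0 < u) (y : ℝ) :
    arcosh u - y = log ((u + √(u ^ 2 - 1)) * exp (-y)) := by
  have : 0 < u + √(u ^ 2 - 1) := add_pos_of_pos_of_nonneg hu (sqrt_nonneg _)
  rw [log_mul this.ne' (exp_ne_zero _), log_exp, arcosh]
  ring

lemma tendsto_arcosh_sub_of_tendsto_mul_exp_neg {u : ℝ → ℝ} {L : ℝ} (hL : 0 < L)
    (hu : Tendsto (fun y => u y * exp (-y)) atTop (𝓝 L)) :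
    Tendsto (fun y => arcosh (u y) - y) atTop (𝓝 (log (2 * L))) := by
  have hsqrt : Tendsto (fun y => √((u y * exp (-y)) ^ 2 - exp (-y) ^ 2)) atTop (𝓝 L) := by
    have := ((hu.pow 2).sub (tendsto_exp_neg_atTop_nhds_zero.pow 2)).sqrt
    rwa [zero_pow two_ne_zero, sub_zero, sqrt_sq hL.le] at this
  have hsum : Tendsto (fun y => (u y + √(u y ^ 2 - 1)) * exp (-y)) atTop (𝓝 (2 * L)) := by
    simp_rw [add_sqrt_sq_sub_one_mul_exp_neg, two_mul]
    exact hu.add hsqrt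
  have hpos : ∀ᶠ y in atTop, 0 < u y := by
    filter_upwards [hu.eventually (eventually_gt_nhds hL)] with y hy
    exact pos_of_mul_pos_left hy (exp_pos _).le
  refine ((continuousAt_log (by positivity)).tendsto.comp hsum).congr' ?_
  filter_upwards [hpos] with y hy
  exact (arcosh_sub_eq_log_add_sqrt_mul_exp_neg hy y).symm

theorem f_limit_general (x θ : ℝ) :
    Filter.Tendsto (fun y : ℝ =>
      arcosh (Real.cosh x * Real.cosh y - Real.sinh x * Real.sinh y * Real.cos θ) - y)
      Filter.atTop
      (nhds (Real.log (Real.cosh x - Real.sinh x * Real.cos θ))) := by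
  set c := cosh x - sinh x * cos θ
  have hc : 0 < c := cosh_sub_sinh_mul_pos x (abs_cos_le_one θ)
  have hv : Tendsto (fun y => (cosh x * cosh y - sinh x * sinh y * cos θ) * exp (-y))
      atTop (𝓝 (c / 2)) := by
    simp_rw [cosh_mul_cosh_sub_sinh_mul_sinh_mul_mul_exp_neg]
    simpa using (tendsto_exp_neg_atTop_nhds_zero.pow 2).const_mul
      ((cosh x + sinh x * cos θ) / 2) |>.const_add (c / 2)
  simpa [mul_div_cancel₀ c two_ne_zero] using
    tendsto_arcosh_sub_of_tendsto_mul_exp_neg (half_pos hc) hv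

theorem f_limit (x θ : ℝ) (hx : 0 < x) (hθ : θ ∈ Set.Icc 0 Real.pi) :
    Filter.Tendsto (fun y : ℝ =>
      arcosh (Real.cosh x * Real.cosh y - Real.sinh x * Real.sinh y * Real.cos θ) - y)
      Filter.atTop
      (nhds (Real.log (Real.cosh x - Real.sinh x * Real.cos θ))) :=
  f_limit_general x θ
end

section
/- Let θ be uniformly distributed on [0, π] and let d > 0 be fixed. Then E[exp(−g(d,θ)/2)] = (2/π)·e^{−d/2}·K(√(1 − e^{−2d})), where g(d,θ) = log(cosh(d) − sinh(d)·cos(θ)) and K is the complete elliptic integral of the first kind K(k) = ∫₀^{π/2} (1 − k²·sin²(φ))^{−1/2} dφ. -/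
/-- The complete elliptic integral of the first kind. -/
noncomputable def ellipticK (k : ℝ) : ℝ :=
  ∫ φ in (0:ℝ)..(Real.pi / 2), (Real.sqrt (1 - k ^ 2 * Real.sin φ ^ 2))⁻¹

/-- The asymptotic distance increment `g(d,θ) = log(cosh d − sinh d · cos θ)`. -/
noncomputable def g (d θ : ℝ) : ℝ := Real.log (Real.cosh d - Real.sinh d * Real.cos θ)

/-! The substitution `θ = π - 2φ` turns `a - b cos θ` into `(a + b)(1 - k² sin² φ)` with
`k² = 2b/(a + b)`, so `∫₀^π (a - b cos θ)^{-1/2} dθ = 2 (a + b)^{-1/2} K(k)`. For `a = cosh d`,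
`b = sinh d` one has `a + b = e^d` and `k² = 1 - e^{-2d}`. -/

open Real

theorem exp_neg_log_div_two {x : ℝ} (hx : 0 < x) : exp (-log x / 2) = (√x)⁻¹ := by
  rw [exp_half, exp_neg, exp_log hx, sqrt_inv]

theorem intervalIntegral.integral_eq_two_mul_integral_comp_sub_two_mul (f : ℝ → ℝ) (a : ℝ) :
    ∫ x in (0 : ℝ)..a, f x = 2 * ∫ x in (0 : ℝ)..a / 2, f (a - 2 * x) := by
  rw [intervalIntegral.integral_comp_sub_mul f two_ne_zero, smul_eq_mul, mul_div_cancel₀ _ two_ne_zero,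
    sub_self, mul_zero, sub_zero, mul_inv_cancel_left₀ two_ne_zero]

theorem sub_mul_cos_pi_sub_two_mul {a b : ℝ} (hab : a + b ≠ 0) (φ : ℝ) :
    a - b * cos (π - 2 * φ) = (a + b) * (1 - 2 * b / (a + b) * sin φ ^ 2) := by
  rw [cos_pi_sub, cos_two_mul, cos_sq']
  field_simp
  ring

theorem integral_inv_sqrt_sub_mul_cos {a b : ℝ} (hab : 0 < a + b) (hb : 0 ≤ b) :
    ∫ θ in (0 : ℝ)..π, (√(a - b * cos θ))⁻¹ = 2 / √(a + b) * ellipticK (√(2 * b / (a + b))) := by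
  have hk : √(2 * b / (a + b)) ^ 2 = 2 * b / (a + b) := sq_sqrt (by positivity)
  simp_rw [intervalIntegral.integral_eq_two_mul_integral_comp_sub_two_mul _ π,
    sub_mul_cos_pi_sub_two_mul hab.ne', sqrt_mul hab.le, mul_inv, intervalIntegral.integral_const_mul,
    ellipticK, hk]
  ring

theorem cosh_sub_sinh_mul_cos_pos (d θ : ℝ) : 0 < cosh d - sinh d * cos θ := by
  have hcos : |sinh d * cos θ| ≤ |sinh d| := by
    rw [abs_mul]
    exact mul_le_of_le_one_right (abs_nonneg _) (abs_cos_le_one θ)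
  have hsinh : |sinh d| < cosh d := by
    rw [abs_sinh]
    exact (sinh_lt_cosh _).trans_le (cosh_abs d).le
  linarith [le_abs_self (sinh d * cos θ)]

/-- For `θ` uniform on `[0,π]`,
`E[exp(−g(d,θ)/2)] = (2/π) e^{−d/2} K(√(1−e^{−2d}))`. -/
theorem expectation_exp_neg_half_g (d : ℝ) (hd : 0 < d) :
    (Real.pi)⁻¹ * ∫ θ in (0:ℝ)..Real.pi, Real.exp (-(g d θ) / 2) =
      2 / Real.pi * Real.exp (-d / 2) * ellipticK (Real.sqrt (1 - Real.exp (-2 * d))) := by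
  have hsum : cosh d + sinh d = exp d := cosh_add_sinh d
  have hmod : 2 * sinh d / exp d = 1 - exp (-2 * d) := by
    rw [sinh_eq, show -2 * d = -d + -d by ring, exp_add, exp_neg]
    field_simp
  have hscale : 2 / √(exp d) = 2 * exp (-d / 2) := by
    rw [← exp_half, neg_div, exp_neg, div_eq_mul_inv]
  simp_rw [g, exp_neg_log_div_two (cosh_sub_sinh_mul_cos_pos d _)]
  rw [integral_inv_sqrt_sub_mul_cos (hsum ▸ exp_pos d) (sinh_nonneg_iff.mpr hd.le), hsum, hmod, hscale]
  ring
end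

section
/- For every ε ∈ (0,1) and n ≥ 2, the ratio h(R) = ∫₀^{2R} sinh(t)^{n−1} e^{−(1−ε)t/2} dt ⧸ ∫₀^{2R} sinh(t)^{n−1} dt satisfies h(R) ≤ A·e^{−R(1−ε)} for all R ≥ 1, for some constant A = A(ε,n) ∈ (0,∞). -/
theorem h_ratio_bound (ε : ℝ) (hε : ε ∈ Set.Ioo (0:ℝ) 1) (n : ℕ) (hn : 2 ≤ n) :
    ∃ A : ℝ, 0 < A ∧ ∀ R : ℝ, 1 ≤ R →
      (∫ t in (0:ℝ)..(2 * R), Real.sinh t ^ (n - 1) * Real.exp (-(1 - ε) * t / 2)) /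
          (∫ t in (0:ℝ)..(2 * R), Real.sinh t ^ (n - 1)) ≤
        A * Real.exp (-R * (1 - ε)) := by
  obtain ⟨hε0, hε1⟩ := hε
  set m : ℕ := n - 1 with hm
  have hm1 : 1 ≤ m := by omega
  have hm1' : (1:ℝ) ≤ m := by exact_mod_cast hm1
  set c : ℝ := m - (1 - ε)/2 with hc
  have hc0 : 0 < c := by rw [hc]; nlinarith
  refine ⟨2^m * Real.exp m / c, by positivity, ?_⟩
  intro R hR
  have hR0 : (0:ℝ) ≤ 2 * R := by linarith
  -- integrability facts
  have cont1 : Continuous fun t : ℝ => Real.sinh t ^ m * Real.exp (-(1 - ε) * t / 2) := by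
    fun_prop
  have cont2 : Continuous fun t : ℝ => Real.sinh t ^ m := by fun_prop
  have cont3 : Continuous fun t : ℝ => (1 / 2^m : ℝ) * Real.exp (t * c) := by fun_prop
  -- numerator bound
  have hnum : (∫ t in (0:ℝ)..(2 * R), Real.sinh t ^ m * Real.exp (-(1 - ε) * t / 2))
      ≤ 1 / 2^m * Real.exp (2 * R * c) / c := by
    have step1 : (∫ t in (0:ℝ)..(2 * R), Real.sinh t ^ m * Real.exp (-(1 - ε) * t / 2))
        ≤ ∫ t in (0:ℝ)..(2 * R), (1 / 2^m : ℝ) * Real.exp (t * c) := by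
      apply intervalIntegral.integral_mono_on hR0
        (cont1.intervalIntegrable _ _) (cont3.intervalIntegrable _ _)
      intro t ht
      have ht0 : 0 ≤ t := ht.1
      have h1 : Real.sinh t ≤ Real.exp t / 2 := by
        rw [Real.sinh_eq]
        have := Real.exp_pos (-t)
        linarith
      have h2 : Real.sinh t ^ m ≤ (Real.exp t / 2) ^ m :=
        pow_le_pow_left₀ (Real.sinh_nonneg_iff.mpr ht0) h1 m
      have h3 : (Real.exp t / 2) ^ m * Real.exp (-(1 - ε) * t / 2)
          = 1 / 2^m * Real.exp (t * c) := by
        rw [div_pow, ← Real.exp_nat_mul, div_mul_eq_mul_div, ← Real.exp_add]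
        have hq : (m:ℝ) * t + -(1 - ε) * t / 2 = t * c := by rw [hc]; ring
        rw [hq]; ring
      calc Real.sinh t ^ m * Real.exp (-(1 - ε) * t / 2)
          ≤ (Real.exp t / 2) ^ m * Real.exp (-(1 - ε) * t / 2) :=
            mul_le_mul_of_nonneg_right h2 (Real.exp_pos _).le
        _ = 1 / 2^m * Real.exp (t * c) := h3
    have step2 : (∫ t in (0:ℝ)..(2 * R), (1 / 2^m : ℝ) * Real.exp (t * c))
        = 1 / 2^m * (c⁻¹ * (Real.exp (2 * R * c) - 1)) := by
      rw [intervalIntegral.integral_const_mul,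
        intervalIntegral.integral_comp_mul_right Real.exp hc0.ne',
        integral_exp, smul_eq_mul]
      norm_num
    calc (∫ t in (0:ℝ)..(2 * R), Real.sinh t ^ m * Real.exp (-(1 - ε) * t / 2))
        ≤ 1 / 2^m * (c⁻¹ * (Real.exp (2 * R * c) - 1)) := step1.trans_eq step2
      _ ≤ 1 / 2^m * Real.exp (2 * R * c) / c := by
          rw [mul_div_assoc]
          have h1 : (0:ℝ) < c⁻¹ := by positivity
          have h2m : (0:ℝ) ≤ 1 / 2^m := by positivity
          apply mul_le_mul_of_nonneg_left _ h2m
          rw [div_eq_mul_inv, mul_comm]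
          nlinarith [Real.exp_pos (2 * R * c)]
  -- denominator lower bound
  have hsinh : Real.exp (2 * R - 1) / 4 ≤ Real.sinh (2 * R - 1) := by
    have hx : (1:ℝ) ≤ 2 * R - 1 := by linarith
    rw [Real.sinh_eq]
    have h2 : Real.exp 1 ≤ Real.exp (2 * R - 1) := Real.exp_le_exp.mpr hx
    have h3 : (2:ℝ) ≤ Real.exp 1 := by nlinarith [Real.add_one_le_exp 1]
    have h5 : Real.exp (-(2 * R - 1)) * Real.exp (2 * R - 1) = 1 := by
      rw [← Real.exp_add]; simp
    nlinarith [Real.exp_pos (2 * R - 1), Real.exp_pos (-(2 * R - 1))]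
  have hden : (Real.exp (2 * R - 1) / 4) ^ m
      ≤ ∫ t in (0:ℝ)..(2 * R), Real.sinh t ^ m := by
    have hsplit : (∫ t in (0:ℝ)..(2 * R), Real.sinh t ^ m)
        = (∫ t in (0:ℝ)..(2 * R - 1), Real.sinh t ^ m)
          + ∫ t in (2 * R - 1)..(2 * R), Real.sinh t ^ m := by
      rw [intervalIntegral.integral_add_adjacent_intervals
        (cont2.intervalIntegrable _ _) (cont2.intervalIntegrable _ _)]
    have h1 : (0:ℝ) ≤ ∫ t in (0:ℝ)..(2 * R - 1), Real.sinh t ^ m := by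
      apply intervalIntegral.integral_nonneg (by linarith)
      intro t ht
      exact pow_nonneg (Real.sinh_nonneg_iff.mpr ht.1) m
    have h2 : Real.sinh (2 * R - 1) ^ m
        ≤ ∫ t in (2 * R - 1)..(2 * R), Real.sinh t ^ m := by
      have := intervalIntegral.integral_mono_on (a := 2 * R - 1) (b := 2 * R)
        (f := fun _ => Real.sinh (2 * R - 1) ^ m) (g := fun t => Real.sinh t ^ m)
        (by linarith) (intervalIntegrable_const (μ := MeasureTheory.volume)) (cont2.intervalIntegrable _ _)
        (fun t ht => by
          apply pow_le_pow_left₀ (Real.sinh_nonneg_iff.mpr (by linarith [ht.1]))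
            (Real.sinh_le_sinh.mpr ht.1) m)
      rw [intervalIntegral.integral_const, smul_eq_mul] at this
      calc Real.sinh (2 * R - 1) ^ m
          = (2 * R - (2 * R - 1)) * Real.sinh (2 * R - 1) ^ m := by ring
        _ ≤ _ := this
    have h3 : (Real.exp (2 * R - 1) / 4) ^ m ≤ Real.sinh (2 * R - 1) ^ m :=
      pow_le_pow_left₀ (by positivity) hsinh m
    rw [hsplit]
    linarith
  have hDpos : 0 < ∫ t in (0:ℝ)..(2 * R), Real.sinh t ^ m :=
    lt_of_lt_of_le (by positivity) hden
  rw [div_le_iff₀ hDpos]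
  -- key algebraic identity
  have hkey : 2^m * Real.exp m / c * Real.exp (-R * (1 - ε)) * (Real.exp (2 * R - 1) / 4) ^ m
      = 1 / 2^m * Real.exp (2 * R * c) / c := by
    have hexp : Real.exp (m:ℝ) * (Real.exp (-R * (1 - ε)) * Real.exp ((m:ℝ) * (2 * R - 1)))
        = Real.exp (2 * R * c) := by
      rw [← Real.exp_add, ← Real.exp_add]
      congr 1
      rw [hc]; ring
    rw [div_pow, ← Real.exp_nat_mul, ← hexp]
    have h4 : (4:ℝ)^m = 2^m * 2^m := by rw [← mul_pow]; norm_num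
    rw [h4]
    field_simp
  calc (∫ t in (0:ℝ)..(2 * R), Real.sinh t ^ m * Real.exp (-(1 - ε) * t / 2))
      ≤ 1 / 2^m * Real.exp (2 * R * c) / c := hnum
    _ = 2^m * Real.exp m / c * Real.exp (-R * (1 - ε)) * (Real.exp (2 * R - 1) / 4) ^ m :=
        hkey.symm
    _ ≤ 2^m * Real.exp m / c * Real.exp (-R * (1 - ε))
        * ∫ t in (0:ℝ)..(2 * R), Real.sinh t ^ m := by
        apply mul_le_mul_of_nonneg_left hden (by positivity)
end
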